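/- arXiv:2301.12123 — 5 statements merged into one kernel-verified Lean document; each statement's English description precedes it below -/
import Mathlib

section
/- Let $(A_n)$ be a sequence of events with $P(A_n) \to 0$. If $\sum_{n=1}^\infty P(A_n \cap A_{n+1}^c) < \infty$, then $P(\limsup_n A_n) = 0$. -/
open MeasureTheory Filter Set

/-! If `ω` lies in infinitely many `A n` but only finitely often leaves the sequence (that is,
lies in only finitely many `A n \ A (n + 1)`), then it stays in `A n` from some point on. Hence
`limsup A ⊆ limsup (A n \ A (n + 1)) ∪ liminf A`: the first set is null by the first
Borel–Cantelli lemma, the second because `μ (A n) → 0`. -/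

theorem Nat.eventually_atTop_of_frequently_of_eventually_imp_succ {p : ℕ → Prop}
    (hp : ∃ᶠ n in atTop, p n) (hstep : ∀ᶠ n in atTop, p n → p (n + 1)) :
    ∀ᶠ n in atTop, p n := by
  obtain ⟨N, hN⟩ := eventually_atTop.1 hstep
  obtain ⟨k, hNk, hk⟩ := frequently_atTop.1 hp N
  refine eventually_atTop.2 ⟨k, fun m hkm => ?_⟩
  induction m, hkm using Nat.le_induction with
  | base => exact hk
  | succ m hkm ih => exact hN m (hNk.trans hkm) ih

theorem Set.limsup_subset_limsup_diff_succ_union_liminf {α : Type*} (A : ℕ → Set α) :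
    limsup A atTop ⊆ limsup (fun n => A n \ A (n + 1)) atTop ∪ liminf A atTop := by
  intro ω hω
  rw [mem_union, or_iff_not_imp_left, mem_limsup_iff_frequently_mem, not_frequently,
    mem_liminf_iff_eventually_mem]
  intro hstay
  refine Nat.eventually_atTop_of_frequently_of_eventually_imp_succ
    (mem_limsup_iff_frequently_mem.1 hω) (hstay.mono fun n hn hωn => ?_)
  by_contra hωn'
  exact hn ⟨hωn, hωn'⟩

theorem MeasureTheory.measure_liminf_atTop_eq_zero_of_tendsto_zero {α F : Type*}
    [FunLike F (Set α) ENNReal] [OuterMeasureClass F α] {μ : F} {A : ℕ → Set α}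
    (h0 : Tendsto (fun n => μ (A n)) atTop (nhds 0)) :
    μ (liminf A atTop) = 0 := by
  rw [liminf_eq_iSup_iInf_of_nat]
  refine measure_iUnion_null fun n => nonpos_iff_eq_zero.1 <| ge_of_tendsto h0 ?_
  exact eventually_atTop.2 ⟨n, fun m hm => measure_mono (biInter_subset_of_mem hm)⟩

theorem barndorff_nielsen_general {Ω : Type*} [MeasurableSpace Ω] (μ : Measure Ω)
    (A : ℕ → Set Ω)
    (h0 : Tendsto (fun n => μ (A n)) atTop (nhds 0))
    (h : ∑' n, μ (A n ∩ (A (n + 1))ᶜ) < ⊤) :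
    μ (limsup A atTop) = 0 :=
  measure_mono_null (limsup_subset_limsup_diff_succ_union_liminf A) <|
    measure_union_null (measure_limsup_atTop_eq_zero h.ne)
      (measure_liminf_atTop_eq_zero_of_tendsto_zero h0)

theorem barndorff_nielsen {Ω : Type*} [MeasurableSpace Ω] (μ : Measure Ω)
    [IsProbabilityMeasure μ] (A : ℕ → Set Ω) (hA : ∀ n, MeasurableSet (A n))
    (h0 : Tendsto (fun n => μ (A n)) atTop (nhds 0))
    (h : ∑' n, μ (A n ∩ (A (n + 1))ᶜ) < ⊤) :
    μ (limsup A atTop) = 0 :=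
  barndorff_nielsen_general μ A h0 h
end

section
/- Let $(A_n)$ be a sequence of events with $P(A_n) \to 0$, and let $m \geq 0$ be a fixed integer. If $\sum_{n=1}^\infty P(A_n^c \cap A_{n+1}^c \cap \cdots \cap A_{n+m-1}^c \cap A_{n+m}) < \infty$, then $P(\limsup_n A_n) = 0$. -/
/-!
Fix `n`. If `ω` lies in some `A k` with `k ≥ n`, look at the least such `k`: either `k < n + m`,
or `ω` misses the `m` sets just before `A k`, i.e. `ω ∈ entryAfterGap A m (k - m)` with `k - m ≥ n`.
Hence `μ (limsup A) ≤ ∑_{j < m} μ (A (n + j)) + ∑_{i ≥ n} μ (entryAfterGap A m i)` for every `n`;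
the first sum tends to `0` because `μ (A n) → 0`, the second as the tail of a convergent series.
-/

open MeasureTheory Filter Set Topology

section

variable {α : Type*}

def entryAfterGap (A : ℕ → Set α) (m n : ℕ) : Set α :=
  (⋂ j ∈ Finset.range m, (A (n + j))ᶜ) ∩ A (n + m)

lemma iUnion_ge_subset_union_entryAfterGap (A : ℕ → Set α) (m n : ℕ) :
    ⋃ k ≥ n, A k ⊆ (⋃ j ∈ Finset.range m, A (n + j)) ∪ ⋃ i, entryAfterGap A m (i + n) := by
  classical
  intro ω hω
  simp only [mem_iUnion] at hω
  obtain ⟨k, hk, hωk⟩ := hω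
  have hex : ∃ k, n ≤ k ∧ ω ∈ A k := ⟨k, hk, hωk⟩
  obtain ⟨hnk₀, hωk₀⟩ := Nat.find_spec hex
  set k₀ := Nat.find hex
  by_cases hearly : k₀ < n + m
  · refine Or.inl (mem_biUnion (Finset.mem_range.mpr (show k₀ - n < m by omega)) ?_)
    rwa [show n + (k₀ - n) = k₀ by omega]
  · refine Or.inr (mem_iUnion.mpr ⟨k₀ - m - n, ?_⟩)
    rw [entryAfterGap, show k₀ - m - n + n = k₀ - m by omega, show k₀ - m + m = k₀ by omega]
    refine ⟨?_, hωk₀⟩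
    simp only [mem_iInter, mem_compl_iff, Finset.mem_range]
    exact fun j hj hmem => Nat.find_min hex (show k₀ - m + j < k₀ by omega) ⟨by omega, hmem⟩

lemma measure_limsup_le_add_tsum_entryAfterGap [MeasurableSpace α] (μ : Measure α)
    (A : ℕ → Set α) (m n : ℕ) :
    μ (limsup A atTop) ≤
      ∑ j ∈ Finset.range m, μ (A (n + j)) + ∑' i, μ (entryAfterGap A m (i + n)) := by
  have hlimsup : limsup A atTop ⊆ ⋃ k ≥ n, A k := by
    rw [limsup_eq_iInf_iSup_of_nat]
    exact iInf_le _ n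
  calc μ (limsup A atTop)
      ≤ μ ((⋃ j ∈ Finset.range m, A (n + j)) ∪ ⋃ i, entryAfterGap A m (i + n)) :=
        measure_mono (hlimsup.trans (iUnion_ge_subset_union_entryAfterGap A m n))
    _ ≤ μ (⋃ j ∈ Finset.range m, A (n + j)) + μ (⋃ i, entryAfterGap A m (i + n)) :=
        measure_union_le _ _
    _ ≤ ∑ j ∈ Finset.range m, μ (A (n + j)) + ∑' i, μ (entryAfterGap A m (i + n)) :=
        add_le_add (measure_biUnion_finset_le _ _) (measure_iUnion_le _)

end

theorem balakrishnan_stepanov_general {Ω : Type*} [MeasurableSpace Ω] (μ : Measure Ω)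
    (A : ℕ → Set Ω)
    (m : ℕ)
    (h0 : Tendsto (fun n => μ (A n)) atTop (nhds 0))
    (h : ∑' n, μ ((⋂ j ∈ Finset.range m, (A (n + j))ᶜ) ∩ A (n + m)) < ⊤) :
    μ (limsup A atTop) = 0 := by
  have hwindow : Tendsto (fun n => ∑ j ∈ Finset.range m, μ (A (n + j))) atTop (𝓝 0) := by
    simpa using tendsto_finsetSum _ fun j _ => h0.comp (tendsto_add_atTop_nat j)
  have htail : Tendsto (fun n => ∑' i, μ (entryAfterGap A m (i + n))) atTop (𝓝 0) :=
    ENNReal.tendsto_sum_nat_add (fun k => μ (entryAfterGap A m k)) h.ne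
  have hbound := hwindow.add htail
  rw [add_zero] at hbound
  exact le_antisymm (ge_of_tendsto' hbound (measure_limsup_le_add_tsum_entryAfterGap μ A m)) zero_le

theorem balakrishnan_stepanov {Ω : Type*} [MeasurableSpace Ω] (μ : Measure Ω)
    [IsProbabilityMeasure μ] (A : ℕ → Set Ω) (hA : ∀ n, MeasurableSet (A n))
    (m : ℕ)
    (h0 : Tendsto (fun n => μ (A n)) atTop (nhds 0))
    (h : ∑' n, μ ((⋂ j ∈ Finset.range m, (A (n + j))ᶜ) ∩ A (n + m)) < ⊤) :
    μ (limsup A atTop) = 0 :=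
  balakrishnan_stepanov_general μ A m h0 h
end

section
/- Let $(A_n)$ be a sequence of events with $P(A_n) \to 0$, and let $m \geq 0$ be a fixed integer. If $\sum_{n=1}^\infty P(A_n \cap A_{n+1}^c \cap \cdots \cap A_{n+m}^c) < \infty$, then $P(\limsup_n A_n) = 0$. -/
/-!
Call `Bₙ = Aₙ ∩ Aₙ₊₁ᶜ ∩ ⋯ ∩ Aₙ₊ₘᶜ` and `Wₙ = Aₙ₊₁ ∪ ⋯ ∪ Aₙ₊ₘ`. By Borel–Cantelli almost every
point lies in only finitely many `Bₙ`. A point of `limsup Aₙ` that eventually avoids the `Bₙ`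
returns to the `Aₙ` after at most `m` steps, so it lies in every `Wₙ` from some index on.
Since `μ Wₙ ≤ μ Aₙ₊₁ + ⋯ + μ Aₙ₊ₘ → 0`, the set `liminf Wₙ` of such points is null.
-/

open MeasureTheory Filter Set

theorem Nat.exists_add_mem_of_gap_le {S : Set ℕ} {k m : ℕ} (hk : k ∈ S)
    (hS : ∀ i ∈ S, k ≤ i → ∃ j ∈ Finset.Icc 1 m, i + j ∈ S) {N : ℕ} (hN : k ≤ N) :
    ∃ j ∈ Finset.Icc 1 m, N + j ∈ S := by
  induction N, hN using Nat.le_induction with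
  | base => exact hS k hk le_rfl
  | succ N hkN ih =>
    obtain ⟨j, hj, hNj⟩ := ih
    rw [Finset.mem_Icc] at hj
    rcases hj.1.eq_or_lt with rfl | hj1
    · exact hS (N + 1) hNj (by omega)
    · refine ⟨j - 1, Finset.mem_Icc.2 ⟨by omega, by omega⟩, ?_⟩
      rwa [show N + 1 + (j - 1) = N + j by omega]

theorem limsup_subset_limsup_inter_iInter_compl_union_liminf {α : Type*} (A : ℕ → Set α) (m : ℕ) :
    limsup A atTop ⊆
      limsup (fun n => A n ∩ ⋂ j ∈ Finset.Icc 1 m, (A (n + j))ᶜ) atTop ∪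
        liminf (fun n => ⋃ j ∈ Finset.Icc 1 m, A (n + j)) atTop := by
  intro x hx
  rw [mem_limsup_iff_frequently_mem] at hx
  rw [mem_union, mem_limsup_iff_frequently_mem, mem_liminf_iff_eventually_mem]
  refine or_iff_not_imp_left.2 fun hB => ?_
  obtain ⟨n, hn⟩ := eventually_atTop.1 (not_frequently.1 hB)
  obtain ⟨k, hnk, hk⟩ := frequently_atTop.1 hx n
  have hgap : ∀ i ∈ {i | x ∈ A i}, k ≤ i → ∃ j ∈ Finset.Icc 1 m, i + j ∈ {i | x ∈ A i} := by
    intro i hi hki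
    by_contra! hne
    exact hn i (hnk.trans hki) ⟨hi, mem_iInter₂.2 hne⟩
  filter_upwards [eventually_ge_atTop k] with N hN
  simpa only [mem_iUnion₂, exists_prop, mem_ofPred_eq] using Nat.exists_add_mem_of_gap_le hk hgap hN

section Measure

variable {α : Type*} [MeasurableSpace α] {μ : Measure α}

theorem measure_liminf_atTop_eq_zero_of_tendsto {s : ℕ → Set α}
    (hs : Tendsto (fun n => μ (s n)) atTop (nhds 0)) : μ (liminf s atTop) = 0 := by
  rw [liminf_eq_iSup_iInf_of_nat]
  refine measure_iUnion_null fun n => le_antisymm ?_ zero_le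
  exact ge_of_tendsto hs <| eventually_atTop.2
    ⟨n, fun i hi => measure_mono (biInter_subset_of_mem (show n ≤ i from hi))⟩

theorem tendsto_measure_biUnion_add_atTop_zero {s : ℕ → Set α}
    (hs : Tendsto (fun n => μ (s n)) atTop (nhds 0)) (J : Finset ℕ) :
    Tendsto (fun n => μ (⋃ j ∈ J, s (n + j))) atTop (nhds 0) := by
  have hsum : Tendsto (fun n => ∑ j ∈ J, μ (s (n + j))) atTop (nhds 0) := by
    simpa using tendsto_finsetSum J fun j _ => hs.comp (tendsto_add_atTop_nat j)
  exact tendsto_of_tendsto_of_tendsto_of_le_of_le tendsto_const_nhds hsum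
    (fun _ => zero_le) fun _ => measure_biUnion_finset_le _ _

end Measure

theorem stepanov_main_general {Ω : Type*} [MeasurableSpace Ω] (μ : Measure Ω)
    (A : ℕ → Set Ω)
    (m : ℕ)
    (h0 : Tendsto (fun n => μ (A n)) atTop (nhds 0))
    (h : ∑' n, μ (A n ∩ ⋂ j ∈ Finset.Icc 1 m, (A (n + j))ᶜ) < ⊤) :
    μ (limsup A atTop) = 0 :=
  measure_mono_null (limsup_subset_limsup_inter_iInter_compl_union_liminf A m) <|
    measure_union_null (measure_limsup_atTop_eq_zero h.ne)
      (measure_liminf_atTop_eq_zero_of_tendsto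
        (tendsto_measure_biUnion_add_atTop_zero h0 (Finset.Icc 1 m)))

theorem stepanov_main {Ω : Type*} [MeasurableSpace Ω] (μ : Measure Ω)
    [IsProbabilityMeasure μ] (A : ℕ → Set Ω) (hA : ∀ n, MeasurableSet (A n))
    (m : ℕ)
    (h0 : Tendsto (fun n => μ (A n)) atTop (nhds 0))
    (h : ∑' n, μ (A n ∩ ⋂ j ∈ Finset.Icc 1 m, (A (n + j))ᶜ) < ⊤) :
    μ (limsup A atTop) = 0 :=
  stepanov_main_general μ A m h0 h
end

section
/- For any events and integers $0 \leq m \leq k$, $P\left(\bigcup_{j=0}^{k} A_{n+j}\right) \leq \sum_{j=0}^{k-m} P(A_{n+j} \cap A_{n+j+1}^c \cap \cdots \cap A_{n+j+m}^c) + \sum_{j=k-m+1}^{k} P(A_{n+j})$. -/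
/-!
Every point of `⋃_{j ≤ k} A (n + j)` lies in `A (n + j)` for a *last* index `j ≤ k`, hence in
`A (n + j) \ ⋃_{j < i ≤ k} A (n + i)`. Subadditivity bounds the measure of the union by the sum of
the measures of these sets; for `j ≤ k - m` such a set is contained in
`A (n + j) ∩ A (n + j + 1)ᶜ ∩ ⋯ ∩ A (n + j + m)ᶜ`, and for larger `j` simply in `A (n + j)`.
-/

open MeasureTheory Filter Set

section LastOccurrence

variable {α : Type*} (s : ℕ → Set α) (k : ℕ)

theorem biUnion_range_subset_biUnion_sdiff_biUnion_Ioc :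
    ⋃ j ∈ Finset.range (k + 1), s j ⊆
      ⋃ j ∈ Finset.range (k + 1), s j \ ⋃ i ∈ Finset.Ioc j k, s i := by
  classical
  intro x hx
  simp only [mem_iUnion, Finset.mem_range, exists_prop] at hx
  obtain ⟨j, hjk, hxj⟩ := hx
  set last := Nat.findGreatest (fun i => x ∈ s i) k
  have hlast_le : last ≤ k := Nat.findGreatest_le k
  have hx_last : x ∈ s last := Nat.findGreatest_spec (P := fun i => x ∈ s i) (by omega) hxj
  simp only [mem_iUnion, Finset.mem_range, exists_prop, Set.mem_sdiff, Finset.mem_Ioc, not_exists,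
    not_and]
  exact ⟨last, by omega, hx_last, fun i ⟨hlast_i, hik⟩ =>
    Nat.findGreatest_is_greatest (P := fun i => x ∈ s i) hlast_i hik⟩

theorem sdiff_biUnion_Ioc_subset_inter_biInter_Icc_compl {j m : ℕ} (hjm : j + m ≤ k) :
    s j \ ⋃ i ∈ Finset.Ioc j k, s i ⊆ s j ∩ ⋂ i ∈ Finset.Icc 1 m, (s (j + i))ᶜ := by
  rintro x ⟨hxj, hx_later⟩
  simp only [mem_iUnion, Finset.mem_Ioc, exists_prop, not_exists, not_and] at hx_later
  simp only [mem_inter_iff, mem_iInter, Finset.mem_Icc, mem_compl_iff]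
  exact ⟨hxj, fun i ⟨hi, him⟩ => hx_later (j + i) ⟨by omega, by omega⟩⟩

theorem measure_biUnion_range_le_sum_sdiff_biUnion_Ioc [MeasurableSpace α] (μ : Measure α) :
    μ (⋃ j ∈ Finset.range (k + 1), s j) ≤
      ∑ j ∈ Finset.range (k + 1), μ (s j \ ⋃ i ∈ Finset.Ioc j k, s i) :=
  (measure_mono (biUnion_range_subset_biUnion_sdiff_biUnion_Ioc s k)).trans
    (measure_biUnion_finset_le _ _)

end LastOccurrence

theorem Finset.sum_range_succ_eq_sum_range_add_sum_Icc {M : Type*} [AddCommMonoid M]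
    (f : ℕ → M) {l k : ℕ} (hlk : l ≤ k) :
    ∑ j ∈ Finset.range (k + 1), f j = ∑ j ∈ Finset.range (l + 1), f j +
      ∑ j ∈ Finset.Icc (l + 1) k, f j := by
  rw [Finset.range_eq_Ico, Finset.range_eq_Ico, ← Finset.Ico_add_one_right_eq_Icc,
    Finset.sum_Ico_consecutive _ (Nat.zero_le _) (by omega)]

theorem truncated_bound_general {Ω : Type*} [MeasurableSpace Ω] (μ : Measure Ω)
    (A : ℕ → Set Ω) (n m k : ℕ) (hmk : m ≤ k) :
    μ (⋃ j ∈ Finset.range (k + 1), A (n + j)) ≤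
      (∑ j ∈ Finset.range (k - m + 1),
          μ (A (n + j) ∩ ⋂ i ∈ Finset.Icc 1 m, (A (n + j + i))ᶜ))
        + ∑ j ∈ Finset.Icc (k - m + 1) k, μ (A (n + j)) := by
  set s : ℕ → Set Ω := fun j => A (n + j)
  calc μ (⋃ j ∈ Finset.range (k + 1), s j)
      ≤ ∑ j ∈ Finset.range (k + 1), μ (s j \ ⋃ i ∈ Finset.Ioc j k, s i) :=
        measure_biUnion_range_le_sum_sdiff_biUnion_Ioc s k μ
    _ = ∑ j ∈ Finset.range (k - m + 1), μ (s j \ ⋃ i ∈ Finset.Ioc j k, s i) +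
          ∑ j ∈ Finset.Icc (k - m + 1) k, μ (s j \ ⋃ i ∈ Finset.Ioc j k, s i) :=
        Finset.sum_range_succ_eq_sum_range_add_sum_Icc _ (Nat.sub_le k m)
    _ ≤ _ := by
        gcongr with j hj j
        · have hjm : j + m ≤ k := by rw [Finset.mem_range] at hj; omega
          simpa only [s, add_assoc] using sdiff_biUnion_Ioc_subset_inter_biInter_Icc_compl s k hjm
        · exact sdiff_subset

theorem truncated_bound {Ω : Type*} [MeasurableSpace Ω] (μ : Measure Ω)
    [IsProbabilityMeasure μ] (A : ℕ → Set Ω) (hA : ∀ n, MeasurableSet (A n))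
    (n m k : ℕ) (hn : 1 ≤ n) (hmk : m ≤ k) :
    μ (⋃ j ∈ Finset.range (k + 1), A (n + j)) ≤
      (∑ j ∈ Finset.range (k - m + 1),
          μ (A (n + j) ∩ ⋂ i ∈ Finset.Icc 1 m, (A (n + j + i))ᶜ))
        + ∑ j ∈ Finset.Icc (k - m + 1) k, μ (A (n + j)) :=
  truncated_bound_general μ A n m k hmk
end

section
/- Let $(A_n)$ be events with $P(A_n) \to 0$ and fix $m \geq 0$. Then for every $n \geq 1$, $P\left(\bigcup_{i=n}^{\infty} A_i\right) \leq \limsup_{k \to \infty} \sum_{j=1}^{m} P(A_{k-j+1}) + \sum_{i=n}^{\infty} P(A_i \cap A_{i+1}^c \cap \cdots \cap A_{i+m}^c)$, and in particular $P\left(\bigcup_{i=n}^{\infty} A_i\right) \leq \sum_{i=n}^{\infty} P(A_i \cap A_{i+1}^c \cap \cdots \cap A_{i+m}^c)$ since $P(A_n) \to 0$. -/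
open MeasureTheory Filter Set ENNReal

theorem tail_union_bound {Ω : Type*} [MeasurableSpace Ω] (μ : Measure Ω)
    [IsProbabilityMeasure μ] (A : ℕ → Set Ω) (hA : ∀ n, MeasurableSet (A n))
    (m : ℕ)
    (h0 : Tendsto (fun n => μ (A n)) atTop (nhds 0))
    (n : ℕ) (hn : 1 ≤ n) :
    μ (⋃ i, A (n + i)) ≤
        (limsup (fun k => ∑ j ∈ Finset.Icc 1 m, μ (A (k - j + 1))) atTop)
          + ∑' i, μ (A (n + i) ∩ ⋂ j ∈ Finset.Icc 1 m, (A (n + i + j))ᶜ) ∧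
      μ (⋃ i, A (n + i)) ≤
        ∑' i, μ (A (n + i) ∩ ⋂ j ∈ Finset.Icc 1 m, (A (n + i + j))ᶜ) := by
  classical
  set B : ℕ → Set Ω := fun i => A i ∩ ⋂ j ∈ Finset.Icc 1 m, (A (i + j))ᶜ with hB
  have key : μ (⋃ i, A (n + i)) ≤ ∑' i, μ (B (n + i)) := by
    have hmono : Monotone (fun N => ⋃ i < N, A (n + i)) := by
      intro a b hab
      exact iUnion₂_mono' fun i hi => ⟨i, lt_of_lt_of_le hi hab, subset_rfl⟩
    have hUeq : ⋃ N, ⋃ i < N, A (n + i) = ⋃ i, A (n + i) := by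
      apply subset_antisymm
      · exact iUnion_subset fun N => iUnion₂_subset fun i _ => subset_iUnion (fun i => A (n + i)) i
      · intro ω hω
        obtain ⟨i, hi⟩ := mem_iUnion.1 hω
        exact mem_iUnion.2 ⟨i + 1, mem_iUnion₂.2 ⟨i, Nat.lt_succ_self i, hi⟩⟩
    have htend : Tendsto (fun N => μ (⋃ i < N, A (n + i))) atTop
        (nhds (μ (⋃ i, A (n + i)))) := by
      rw [← hUeq]
      exact tendsto_measure_iUnion_atTop hmono
    have hincl : ∀ N : ℕ, 1 ≤ N → (⋃ i < N, A (n + i)) ⊆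
        (⋃ i, B (n + i)) ∪ ⋃ j ∈ Finset.range m, A (n + N + j) := by
      intro N hN ω hω
      simp only [mem_iUnion] at hω
      obtain ⟨i, hiN, hωi⟩ := hω
      set P : ℕ → Prop := fun i => ω ∈ A (n + i) with hP
      set k := Nat.findGreatest P (N - 1 + m) with hk
      have hib : i ≤ N - 1 + m := by omega
      have hPk : P k := Nat.findGreatest_spec hib hωi
      have hkb : k ≤ N - 1 + m := Nat.findGreatest_le _
      by_cases hkN : k ≤ N - 1
      · left
        refine mem_iUnion.2 ⟨k, hPk, ?_⟩
        simp only [mem_iInter]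
        intro j hj
        simp only [Finset.mem_Icc] at hj
        intro hcon
        have hgt : ¬ P (k + j) := Nat.findGreatest_is_greatest (P := P) (n := N - 1 + m) (k := k + j) (by omega) (by omega)
        apply hgt
        show ω ∈ A (n + (k + j))
        rwa [← Nat.add_assoc]
      · right
        push_neg at hkN
        have hm : 1 ≤ m := by omega
        refine mem_iUnion.2 ⟨k - N, ?_⟩
        simp only [Finset.mem_range, mem_iUnion]
        refine ⟨by omega, ?_⟩
        have heq : n + N + (k - N) = n + k := by omega
        rw [heq]; exact hPk
    have hbound : ∀ N : ℕ, 1 ≤ N → μ (⋃ i < N, A (n + i)) ≤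
        (∑' i, μ (B (n + i))) + ∑ j ∈ Finset.range m, μ (A (n + N + j)) := by
      intro N hN
      calc μ (⋃ i < N, A (n + i))
          ≤ μ ((⋃ i, B (n + i)) ∪ ⋃ j ∈ Finset.range m, A (n + N + j)) :=
            measure_mono (hincl N hN)
        _ ≤ μ (⋃ i, B (n + i)) + μ (⋃ j ∈ Finset.range m, A (n + N + j)) :=
            measure_union_le _ _
        _ ≤ (∑' i, μ (B (n + i))) + ∑ j ∈ Finset.range m, μ (A (n + N + j)) := by
            gcongr
            · exact measure_iUnion_le _
            · exact measure_biUnion_finset_le _ _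
    have htend2 : Tendsto
        (fun N => (∑' i, μ (B (n + i))) + ∑ j ∈ Finset.range m, μ (A (n + N + j)))
        atTop (nhds ((∑' i, μ (B (n + i))) + 0)) := by
      apply Tendsto.add tendsto_const_nhds
      have h : Tendsto (fun N => ∑ j ∈ Finset.range m, μ (A (n + N + j))) atTop
          (nhds (∑ j ∈ Finset.range m, (0 : ℝ≥0∞))) := by
        apply tendsto_finset_sum
        intro j _
        apply h0.comp
        exact tendsto_atTop_atTop.2 fun b => ⟨b + j, fun a ha => by omega⟩
      simpa using h
    have := le_of_tendsto_of_tendsto htend htend2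
      (eventually_atTop.2 ⟨1, fun N hN => hbound N hN⟩)
    simpa using this
  have hls : Tendsto (fun k => ∑ j ∈ Finset.Icc 1 m, μ (A (k - j + 1))) atTop (nhds 0) := by
    have h : Tendsto (fun k => ∑ j ∈ Finset.Icc 1 m, μ (A (k - j + 1))) atTop
        (nhds (∑ j ∈ Finset.Icc 1 m, (0 : ℝ≥0∞))) := by
      apply tendsto_finset_sum
      intro j _
      apply h0.comp
      exact tendsto_atTop_atTop.2 fun b => ⟨b + j, fun a ha => by omega⟩
    simpa using h
  have hls0 : limsup (fun k => ∑ j ∈ Finset.Icc 1 m, μ (A (k - j + 1))) atTop = 0 :=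
    hls.limsup_eq
  exact ⟨by rw [hls0, zero_add]; exact key, key⟩
end
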